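/- arXiv:1603.03921 — 3 statements merged into one kernel-verified Lean document; each statement's English description precedes it below -/
import Mathlib

section
/- Let A₀, B₀ be real numbers with 0 < B₀ < A₀ and A₀² − 2B₀² > 0, let n ∈ ℕ, let A₁,…,A_n and B₁,…,B_n be real numbers, and suppose the acceptable-ISI condition 3·Σ_{i=1}^{n}(A_i² + B_i²) < A₀² − 2B₀² holds. Then the quantity a = B₀²/(4A₀²) + (Σ_{i=1}^{n}(A_i² + B_i²)/4)·(1/A₀² − (A₀² + B₀²)/(A₀² − B₀²)²) is strictly positive; in fact a > (B₀²/(4A₀²))·(A₀²B₀² + B₀⁴)/(3(A₀² − B₀²)²) > 0. -/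
open Finset

/-!
Writing `S = ∑ (A_i² + B_i²)`, the coefficient `a` is affine in `S`, and subtracting the lower
bound leaves the factorisation
`a - bound = ((A₀² − 2B₀²) − 3S) / 12 · B₀²(3A₀² − B₀²) / (A₀²(A₀² − B₀²)²)`,
so the acceptable-ISI condition is exactly what makes the difference positive.
-/

/-- The coefficient `a`, as a function of `S = ∑_{i=1}^{n} (A_i² + B_i²)`. -/
noncomputable def coeffA (A₀ B₀ S : ℝ) : ℝ :=
  B₀ ^ 2 / (4 * A₀ ^ 2) + S / 4 * (1 / A₀ ^ 2 - (A₀ ^ 2 + B₀ ^ 2) / (A₀ ^ 2 - B₀ ^ 2) ^ 2)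

noncomputable def coeffALowerBound (A₀ B₀ : ℝ) : ℝ :=
  B₀ ^ 2 / (4 * A₀ ^ 2) * ((A₀ ^ 2 * B₀ ^ 2 + B₀ ^ 4) / (3 * (A₀ ^ 2 - B₀ ^ 2) ^ 2))

section

variable {A₀ B₀ : ℝ}

theorem coeffA_sub_coeffALowerBound (S : ℝ) (hA : A₀ ≠ 0) (hAB : A₀ ^ 2 - B₀ ^ 2 ≠ 0) :
    coeffA A₀ B₀ S - coeffALowerBound A₀ B₀ =
      ((A₀ ^ 2 - 2 * B₀ ^ 2) - 3 * S) / 12 *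
        (B₀ ^ 2 * (3 * A₀ ^ 2 - B₀ ^ 2) / (A₀ ^ 2 * (A₀ ^ 2 - B₀ ^ 2) ^ 2)) := by
  unfold coeffA coeffALowerBound
  field_simp
  ring

theorem coeffALowerBound_pos (hB : 0 < B₀) (hAB : B₀ < A₀) : 0 < coeffALowerBound A₀ B₀ := by
  have hA : 0 < A₀ := hB.trans hAB
  have hsq : B₀ ^ 2 < A₀ ^ 2 := pow_lt_pow_left₀ hAB hB.le two_ne_zero
  have hdiff : 0 < A₀ ^ 2 - B₀ ^ 2 := sub_pos.mpr hsq
  unfold coeffALowerBound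
  positivity

theorem coeffALowerBound_lt_coeffA {S : ℝ} (hB : 0 < B₀) (hAB : B₀ < A₀)
    (hS : 3 * S < A₀ ^ 2 - 2 * B₀ ^ 2) : coeffALowerBound A₀ B₀ < coeffA A₀ B₀ S := by
  have hA : 0 < A₀ := hB.trans hAB
  have hsq : B₀ ^ 2 < A₀ ^ 2 := pow_lt_pow_left₀ hAB hB.le two_ne_zero
  have hdiff : 0 < A₀ ^ 2 - B₀ ^ 2 := sub_pos.mpr hsq
  have hgap : 0 < (A₀ ^ 2 - 2 * B₀ ^ 2) - 3 * S := sub_pos.mpr hS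
  have hfactor : 0 < 3 * A₀ ^ 2 - B₀ ^ 2 := by linarith [pow_pos hA 2]
  rw [← sub_pos, coeffA_sub_coeffALowerBound S hA.ne' hdiff.ne']
  positivity

end

theorem coefficient_a_positive_general
    (A₀ B₀ : ℝ) (hB : 0 < B₀) (hAB : B₀ < A₀)
    (n : ℕ) (A B : ℕ → ℝ)
    (hISI : 3 * ∑ i ∈ Finset.Icc 1 n, ((A i) ^ 2 + (B i) ^ 2) < A₀ ^ 2 - 2 * B₀ ^ 2) :
    B₀ ^ 2 / (4 * A₀ ^ 2) +
        (∑ i ∈ Finset.Icc 1 n, ((A i) ^ 2 + (B i) ^ 2)) / 4 *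
          (1 / A₀ ^ 2 - (A₀ ^ 2 + B₀ ^ 2) / (A₀ ^ 2 - B₀ ^ 2) ^ 2) >
      B₀ ^ 2 / (4 * A₀ ^ 2) * ((A₀ ^ 2 * B₀ ^ 2 + B₀ ^ 4) / (3 * (A₀ ^ 2 - B₀ ^ 2) ^ 2)) ∧
    B₀ ^ 2 / (4 * A₀ ^ 2) * ((A₀ ^ 2 * B₀ ^ 2 + B₀ ^ 4) / (3 * (A₀ ^ 2 - B₀ ^ 2) ^ 2)) > 0 :=
  ⟨coeffALowerBound_lt_coeffA hB hAB hISI, coeffALowerBound_pos hB hAB⟩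

/-- Under the acceptable-ILI condition `A₀² − 2B₀² > 0` and the
acceptable-ISI condition `3·∑_{i=1}^{n}(A_i² + B_i²) < A₀² − 2B₀²`, the coefficient
`a = B₀²/(4A₀²) + (∑(A_i²+B_i²)/4)·(1/A₀² − (A₀²+B₀²)/(A₀²−B₀²)²)` satisfies
`a > (B₀²/(4A₀²))·(A₀²B₀² + B₀⁴)/(3(A₀² − B₀²)²) > 0`. -/
theorem coefficient_a_positive
    (A₀ B₀ : ℝ) (hB : 0 < B₀) (hAB : B₀ < A₀) (hILI : 0 < A₀ ^ 2 - 2 * B₀ ^ 2)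
    (n : ℕ) (A B : ℕ → ℝ)
    (hISI : 3 * ∑ i ∈ Finset.Icc 1 n, ((A i) ^ 2 + (B i) ^ 2) < A₀ ^ 2 - 2 * B₀ ^ 2) :
    B₀ ^ 2 / (4 * A₀ ^ 2) +
        (∑ i ∈ Finset.Icc 1 n, ((A i) ^ 2 + (B i) ^ 2)) / 4 *
          (1 / A₀ ^ 2 - (A₀ ^ 2 + B₀ ^ 2) / (A₀ ^ 2 - B₀ ^ 2) ^ 2) >
      B₀ ^ 2 / (4 * A₀ ^ 2) * ((A₀ ^ 2 * B₀ ^ 2 + B₀ ^ 4) / (3 * (A₀ ^ 2 - B₀ ^ 2) ^ 2)) ∧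
    B₀ ^ 2 / (4 * A₀ ^ 2) * ((A₀ ^ 2 * B₀ ^ 2 + B₀ ^ 4) / (3 * (A₀ ^ 2 - B₀ ^ 2) ^ 2)) > 0 :=
  coefficient_a_positive_general A₀ B₀ hB hAB n A B hISI
end

section
/- Let α > 0, β > 0 and μ ∈ ℝ. Then the generalized Gaussian density f(x) = (β/(2αΓ(1/β)))·exp(−(|x − μ|/α)^β) integrates to 1 over ℝ: ∫_{−∞}^{∞} f(x) dx = 1. -/
open Real MeasureTheory

lemma integral_exp_neg_abs_rpow {β : ℝ} (hβ : 0 < β) :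
    ∫ x : ℝ, exp (-|x| ^ β) = 2 * Gamma (1 / β) / β := by
  calc ∫ x : ℝ, exp (-|x| ^ β)
      = 2 * ∫ x in Set.Ioi (0 : ℝ), exp (-x ^ β) := integral_comp_abs (f := fun x => exp (-x ^ β))
    _ = 2 * Gamma (1 / β + 1) := by rw [integral_exp_neg_rpow hβ]
    _ = 2 * Gamma (1 / β) / β := by
      rw [Gamma_add_one (by positivity)]
      ring

lemma integral_exp_neg_abs_div_rpow {α β : ℝ} (hα : 0 < α) (hβ : 0 < β) :
    ∫ x : ℝ, exp (-(|x| / α) ^ β) = 2 * α * Gamma (1 / β) / β := by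
  calc ∫ x : ℝ, exp (-(|x| / α) ^ β)
      = ∫ x : ℝ, exp (-|x / α| ^ β) := by simp only [abs_div, abs_of_pos hα]
    _ = |α| * ∫ x : ℝ, exp (-|x| ^ β) :=
      Measure.integral_comp_div (fun x => exp (-|x| ^ β)) α
    _ = 2 * α * Gamma (1 / β) / β := by
      rw [integral_exp_neg_abs_rpow hβ, abs_of_pos hα]
      ring

lemma integral_exp_neg_abs_sub_div_rpow (μ : ℝ) {α β : ℝ} (hα : 0 < α) (hβ : 0 < β) :
    ∫ x : ℝ, exp (-(|x - μ| / α) ^ β) = 2 * α * Gamma (1 / β) / β := by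
  rw [integral_sub_right_eq_self (fun x => exp (-(|x| / α) ^ β)) μ,
    integral_exp_neg_abs_div_rpow hα hβ]

/-- The generalized Gaussian density
`f(x) = (β/(2αΓ(1/β)))·exp(−(|x−μ|/α)^β)` with `α, β > 0` integrates to `1` over `ℝ`. -/
theorem generalizedGaussian_integral_eq_one
    (α β μ : ℝ) (hα : 0 < α) (hβ : 0 < β) :
    ∫ x : ℝ, (β / (2 * α * Real.Gamma (1 / β))) * Real.exp (-(|x - μ| / α) ^ β) = 1 := by
  have hΓ : Gamma (1 / β) ≠ 0 := (Gamma_pos_of_pos (by positivity)).ne'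
  rw [integral_const_mul, integral_exp_neg_abs_sub_div_rpow μ hα hβ]
  field_simp
end

section
/- Let α > 0, β > 0 and μ ∈ ℝ, and let f(x) = (β/(2αΓ(1/β)))·exp(−(|x − μ|/α)^β) be the generalized Gaussian density. Then its second central moment equals α²·Γ(3/β)/Γ(1/β): ∫_{−∞}^{∞} (x − μ)²·f(x) dx = α²·Γ(3/β)/Γ(1/β). -/
/-!
Translating by `μ` and folding the even integrand onto `(0, ∞)` reduces the moment to
`∫₀^∞ t^p exp(-(t/α)^β) dt`, which the substitution `u = (t/α)^β` turns into
`α^(p+1) Γ((p+1)/β) / β`; the normalising constant `β / (2αΓ(1/β))` then leaves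
`α^p Γ((p+1)/β) / Γ(1/β)`, and `p = 2` is the claim.
-/

open Real MeasureTheory Set

theorem integral_comp_abs_sub (f : ℝ → ℝ) (μ : ℝ) :
    ∫ x, f |x - μ| = 2 * ∫ t in Ioi (0 : ℝ), f t := by
  rw [integral_sub_right_eq_self (fun x => f |x|) μ, integral_comp_abs]

theorem integral_Ioi_rpow_mul_exp_neg_div_rpow {p α β : ℝ} (hp : -1 < p) (hα : 0 < α)
    (hβ : 0 < β) :
    ∫ t in Ioi (0 : ℝ), t ^ p * exp (-(t / α) ^ β) =
      α ^ (p + 1) / β * Gamma ((p + 1) / β) := by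
  have hscale : ∀ t ∈ Ioi (0 : ℝ), t ^ p * exp (-(t / α) ^ β) =
      t ^ p * exp (-(α ^ β)⁻¹ * t ^ β) := fun t ht => by
    rw [div_rpow (le_of_lt ht) hα.le, div_eq_inv_mul, neg_mul]
  rw [setIntegral_congr_fun measurableSet_Ioi hscale,
    integral_rpow_mul_exp_neg_mul_rpow hβ hp (inv_pos.mpr (rpow_pos_of_pos hα β)),
    ← rpow_neg hα.le, ← rpow_mul hα.le, show -β * (-(p + 1) / β) = p + 1 by field_simp]
  ring

theorem integral_abs_sub_rpow_mul_generalizedGaussian {p α β : ℝ} (hp : -1 < p) (hα : 0 < α)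
    (hβ : 0 < β) (μ : ℝ) :
    ∫ x, |x - μ| ^ p * ((β / (2 * α * Gamma (1 / β))) * exp (-(|x - μ| / α) ^ β)) =
      α ^ p * Gamma ((p + 1) / β) / Gamma (1 / β) := by
  have hΓ : Gamma (1 / β) ≠ 0 := (Gamma_pos_of_pos (by positivity)).ne'
  simp_rw [mul_left_comm _ (β / _)]
  rw [integral_const_mul, integral_comp_abs_sub (fun t => t ^ p * exp (-(t / α) ^ β)),
    integral_Ioi_rpow_mul_exp_neg_div_rpow hp hα hβ, rpow_add_one hα.ne']
  field_simp

/-- The second central moment of the generalized Gaussian density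
`f(x) = (β/(2αΓ(1/β)))·exp(−(|x−μ|/α)^β)` equals `α²·Γ(3/β)/Γ(1/β)`. -/
theorem generalizedGaussian_second_central_moment
    (α β μ : ℝ) (hα : 0 < α) (hβ : 0 < β) :
    ∫ x : ℝ, (x - μ) ^ 2 *
        ((β / (2 * α * Real.Gamma (1 / β))) * Real.exp (-(|x - μ| / α) ^ β)) =
      α ^ 2 * Real.Gamma (3 / β) / Real.Gamma (1 / β) := by
  have h := integral_abs_sub_rpow_mul_generalizedGaussian (p := 2) (by norm_num) hα hβ μ
  norm_num only [rpow_two, sq_abs] at h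
  exact h
end
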